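/- Let Φ be a real N×n matrix whose columns are pairwise orthogonal and all have Euclidean norm c > 0 (necessarily n ≤ N). Then all n singular values of Φ equal c, and consequently for any matrix Ψ with the same number n of columns and any set of n positive singular values with the same sum of squares n·c², one has Σ_k 1/σ_k(Ψ)² ≥ Σ_k 1/σ_k(Φ)² = n/c². -/

import Mathlib

/-!
Orthonormality of the columns up to the factor `c` says exactly `ΦᵀΦ = c² • 1`, so every
eigenvalue of `ΦᵀΦ` is `c²` and every singular value is `c`. The lower bound for an arbitrary
`Ψ` is the Cauchy–Schwarz inequality in Sedrakyan's form `(∑ 1)² / ∑ τₖ² ≤ ∑ 1 / τₖ²`.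
-/

open Matrix

/-- `σ` lists the singular values of the real matrix `A` (square roots of the
eigenvalues of `AᴴA`) in decreasing order. -/
def IsSingularValues {M n : ℕ} (A : Matrix (Fin M) (Fin n) ℝ) (σ : Fin n → ℝ) : Prop :=
  Antitone σ ∧ (∀ i, 0 ≤ σ i) ∧
    ∃ e : Equiv.Perm (Fin n),
      ∀ i, σ i ^ 2 = (Matrix.isHermitian_conjTranspose_mul_self A).eigenvalues (e i)

theorem Matrix.transpose_mul_self_eq_smul_one {m n R : Type*} [Fintype m] [DecidableEq n]
    [CommSemiring R] (A : Matrix m n R) (r : R)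
    (hcols : ∀ j l, ∑ i, A i j * A i l = if j = l then r else 0) :
    Aᵀ * A = r • 1 := by
  ext j l
  simp [mul_apply, hcols, one_apply]

theorem Matrix.IsHermitian.eigenvalues_eq_of_eq_smul_one {𝕜 n : Type*} [RCLike 𝕜] [Fintype n]
    [DecidableEq n] {A : Matrix n n 𝕜} (hA : A.IsHermitian) {r : ℝ} (h : A = r • 1) (i : n) :
    hA.eigenvalues i = r := by
  have : Nonempty n := ⟨i⟩
  have hspec : spectrum ℝ A = {r} := by
    rw [h, ← Algebra.algebraMap_eq_smul_one, spectrum.scalar_eq]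
  have hi : hA.eigenvalues i ∈ spectrum ℝ A := by
    rw [hA.spectrum_real_eq_range_eigenvalues]
    exact Set.mem_range_self i
  rwa [hspec] at hi

theorem IsSingularValues.eq_of_transpose_mul_self_eq_smul_one {M n : ℕ}
    {A : Matrix (Fin M) (Fin n) ℝ} {σ : Fin n → ℝ} (hσ : IsSingularValues A σ) {c : ℝ}
    (hc : 0 ≤ c) (hA : Aᵀ * A = c ^ 2 • 1) (k : Fin n) : σ k = c := by
  obtain ⟨-, hσ_nonneg, _, hσ_sq⟩ := hσ
  have hsq : σ k ^ 2 = c ^ 2 := by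
    rw [hσ_sq k, Matrix.IsHermitian.eigenvalues_eq_of_eq_smul_one _
      (by rwa [conjTranspose_eq_transpose_of_trivial])]
  exact (sq_eq_sq₀ (hσ_nonneg k) hc).mp hsq

/-- A matrix with pairwise orthogonal columns of common norm `c > 0` has all its
singular values equal to `c` (so `Σ 1/σ_k² = n/c²`), and this choice is variance
optimal: any matrix `Ψ` with `n` columns, positive singular values and the same sum of
squared singular values `n·c²` satisfies `Σ 1/σ_k(Ψ)² ≥ n/c²`. -/
theorem orthogonal_columns_variance_optimal {N n : ℕ}
    (Φ : Matrix (Fin N) (Fin n) ℝ) (c : ℝ) (hc : 0 < c)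
    (hcols : ∀ j l : Fin n, (∑ i, Φ i j * Φ i l) = if j = l then c ^ 2 else 0) :
    (∀ σ : Fin n → ℝ, IsSingularValues Φ σ →
        (∀ k, σ k = c) ∧ (∑ k, (σ k ^ 2)⁻¹) = n / c ^ 2) ∧
      (∀ (M : ℕ) (Ψ : Matrix (Fin M) (Fin n) ℝ) (τ : Fin n → ℝ),
        IsSingularValues Ψ τ → (∀ k, 0 < τ k) → (∑ k, τ k ^ 2) = n * c ^ 2 →
          (∑ k, (τ k ^ 2)⁻¹) ≥ n / c ^ 2) := by
  refine ⟨fun σ hσ => ?_, fun M Ψ τ _ hτ hsum => ?_⟩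
  · have hσc := hσ.eq_of_transpose_mul_self_eq_smul_one hc.le
      (Φ.transpose_mul_self_eq_smul_one _ hcols)
    refine ⟨hσc, ?_⟩
    simp [hσc, div_eq_mul_inv]
  · have hn_sq : (n : ℝ) / c ^ 2 = (n : ℝ) ^ 2 / (n * c ^ 2) := by
      rcases eq_or_ne (n : ℝ) 0 with hn | hn
      · simp [hn]
      · field_simp
    calc (n : ℝ) / c ^ 2 = (∑ _k : Fin n, (1 : ℝ)) ^ 2 / ∑ k, τ k ^ 2 := by simp [hsum, hn_sq]
      _ ≤ ∑ k, 1 ^ 2 / τ k ^ 2 :=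
        Finset.sq_sum_div_le_sum_sq_div _ _ fun k _ => pow_pos (hτ k) 2
      _ = ∑ k, (τ k ^ 2)⁻¹ := by simp
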